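/- arXiv:1604.07127 — 6 statements merged into one kernel-verified Lean document; each statement's English description precedes it below -/
import Mathlib

section
/- Let $(E, \leq, d)$ be a metric space equipped with a partial order, and $P : E \times E \to E$ a map satisfying for all $u, v, w, u_0, u_1 \in E$: (a) $P(u,v) \leq u$ and $P(u,v) \leq v$; (b) $P(u,u) = u$; (c) $P$ is symmetric and associative in the sense that $P(P(u,v),w) = P(u, P(v,w))$ and $P(u,v) = P(v,u)$; (d) contractivity: $d(P(v,u_0), P(v,u_1)) \leq d(u_0, u_1)$. Assume additionally that every monotone decreasing $d$-Cauchy sequence in $E$ converges in $d$, and every monotone increasing $d$-Cauchy sequence in $E$ converges in $d$. Then $(E,d)$ is a complete metric space. -/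
/-!
By the controlled-sequence criterion it suffices to show that a sequence `u` with
`dist (u n) (u (n+1)) ≤ C rⁿ`, `r < 1`, converges. For each `k` the iterates
`v k l = foldFrom P u k l` decrease in `l` (associativity lets the newest term be applied
last), and contractivity together with `P u u = u` bounds their steps by those
of `u`; so they converge to some `w k` with `dist (u k) (w k) ≤ C rᵏ / (1 - r)`. Passing to the
limit in `v k (l+1) = P (u k) (v (k+1) l)` gives `w k = P (u k) (w (k+1)) ≤ w (k+1)`, so `w` is an
increasing Cauchy sequence; its limit is the limit of `u`.
-/

open Filter Topology

theorem CauchySeq.congr_dist {α : Type*} [PseudoMetricSpace α] {u w : ℕ → α}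
    (hu : CauchySeq u) (h : Tendsto (fun n => dist (u n) (w n)) atTop (𝓝 0)) :
    CauchySeq w := by
  rw [cauchySeq_iff_tendsto_dist_atTop_0] at hu ⊢
  have h₁ : Tendsto (fun p : ℕ × ℕ => dist (u p.1) (w p.1)) atTop (𝓝 0) :=
    h.comp (prod_atTop_atTop_eq (α := ℕ) (β := ℕ) ▸ tendsto_fst)
  have h₂ : Tendsto (fun p : ℕ × ℕ => dist (u p.2) (w p.2)) atTop (𝓝 0) :=
    h.comp (prod_atTop_atTop_eq (α := ℕ) (β := ℕ) ▸ tendsto_snd)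
  refine squeeze_zero (fun _ => dist_nonneg) (fun p => ?_) (by simpa using (h₁.add hu).add h₂)
  calc dist (w p.1) (w p.2)
      ≤ dist (w p.1) (u p.1) + dist (u p.1) (u p.2) + dist (u p.2) (w p.2) :=
        dist_triangle4 _ _ _ _
    _ = dist (u p.1) (w p.1) + dist (u p.1) (u p.2) + dist (u p.2) (w p.2) := by
        rw [dist_comm (w p.1)]

section foldFrom

variable {E : Type*}

/-- `foldFrom P u k l = P (u k) (P (u (k+1)) (… (u (k+l))))`, the paper's `v^k_l`. -/
def foldFrom (P : E → E → E) (u : ℕ → E) : ℕ → ℕ → E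
  | k, 0 => u k
  | k, l + 1 => P (u k) (foldFrom P u (k + 1) l)

theorem foldFrom_succ_eq {P : E → E → E} (hPassoc : ∀ u v w : E, P (P u v) w = P u (P v w))
    (u : ℕ → E) (k l : ℕ) : foldFrom P u k (l + 1) = P (foldFrom P u k l) (u (k + l + 1)) := by
  induction l generalizing k with
  | zero => rfl
  | succ l ih =>
    rw [foldFrom, ih, foldFrom, hPassoc, show k + 1 + l = k + (l + 1) by omega]

theorem foldFrom_antitone [PartialOrder E] {P : E → E → E} (hPle₁ : ∀ u v : E, P u v ≤ u)
    (hPassoc : ∀ u v w : E, P (P u v) w = P u (P v w)) (u : ℕ → E) (k : ℕ) :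
    Antitone (foldFrom P u k) :=
  antitone_nat_of_succ_le fun l => by
    rw [foldFrom_succ_eq hPassoc]
    exact hPle₁ _ _

variable [PseudoMetricSpace E] {P : E → E → E}

theorem dist_foldFrom_succ_le (hPidem : ∀ u : E, P u u = u)
    (hcontr : ∀ v u₀ u₁ : E, dist (P v u₀) (P v u₁) ≤ dist u₀ u₁) (u : ℕ → E) (k l : ℕ) :
    dist (foldFrom P u k l) (foldFrom P u k (l + 1)) ≤ dist (u (k + l)) (u (k + l + 1)) := by
  induction l generalizing k with
  | zero => simpa [foldFrom, hPidem] using hcontr (u k) (u k) (u (k + 1))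
  | succ l ih =>
    calc dist (foldFrom P u k (l + 1)) (foldFrom P u k (l + 2))
        ≤ dist (foldFrom P u (k + 1) l) (foldFrom P u (k + 1) (l + 1)) := hcontr _ _ _
      _ ≤ dist (u (k + 1 + l)) (u (k + 1 + l + 1)) := ih (k + 1)
      _ = dist (u (k + (l + 1))) (u (k + (l + 1) + 1)) := by
        rw [show k + 1 + l = k + (l + 1) by omega]

theorem dist_foldFrom_le_geometric (hPidem : ∀ u : E, P u u = u)
    (hcontr : ∀ v u₀ u₁ : E, dist (P v u₀) (P v u₁) ≤ dist u₀ u₁) {u : ℕ → E} {C r : ℝ}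
    (hu : ∀ n, dist (u n) (u (n + 1)) ≤ C * r ^ n) (k l : ℕ) :
    dist (foldFrom P u k l) (foldFrom P u k (l + 1)) ≤ C * r ^ k * r ^ l := by
  rw [mul_assoc, ← pow_add]
  exact (dist_foldFrom_succ_le hPidem hcontr u k l).trans (hu (k + l))

end foldFrom

theorem eq_apply_of_tendsto_foldFrom {E : Type*} [MetricSpace E] {P : E → E → E}
    (hcontr : ∀ v u₀ u₁ : E, dist (P v u₀) (P v u₁) ≤ dist u₀ u₁) {u : ℕ → E} {k : ℕ} {a b : E}
    (ha : Tendsto (foldFrom P u k) atTop (𝓝 a))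
    (hb : Tendsto (foldFrom P u (k + 1)) atTop (𝓝 b)) : a = P (u k) b := by
  have hcont : Continuous (P (u k)) :=
    (LipschitzWith.of_dist_le_mul (K := 1) fun x y => by simpa using hcontr (u k) x y).continuous
  exact tendsto_nhds_unique ((tendsto_add_atTop_iff_nat 1).2 ha) ((hcont.tendsto b).comp hb)

theorem exists_tendsto_of_dist_le_geometric {E : Type*} [MetricSpace E] [PartialOrder E]
    {P : E → E → E} (hPle₁ : ∀ u v : E, P u v ≤ u) (hPle₂ : ∀ u v : E, P u v ≤ v)
    (hPidem : ∀ u : E, P u u = u) (hPassoc : ∀ u v w : E, P (P u v) w = P u (P v w))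
    (hcontr : ∀ v u₀ u₁ : E, dist (P v u₀) (P v u₁) ≤ dist u₀ u₁)
    (hdec : ∀ u : ℕ → E, Antitone u → CauchySeq u → ∃ l, Tendsto u atTop (𝓝 l))
    (hinc : ∀ u : ℕ → E, Monotone u → CauchySeq u → ∃ l, Tendsto u atTop (𝓝 l))
    {u : ℕ → E} {C r : ℝ} (hr₀ : 0 ≤ r) (hr : r < 1)
    (hu : ∀ n, dist (u n) (u (n + 1)) ≤ C * r ^ n) : ∃ x, Tendsto u atTop (𝓝 x) := by
  have hgeom := dist_foldFrom_le_geometric hPidem hcontr hu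
  choose w hw using fun k =>
    hdec _ (foldFrom_antitone hPle₁ hPassoc u k) (cauchySeq_of_le_geometric r _ hr (hgeom k))
  have hw_mono : Monotone w := monotone_nat_of_le_succ fun k => by
    rw [eq_apply_of_tendsto_foldFrom hcontr (hw k) (hw (k + 1))]
    exact hPle₂ _ _
  have hdist : Tendsto (fun k => dist (u k) (w k)) atTop (𝓝 0) := by
    have hbound : Tendsto (fun k => C * r ^ k / (1 - r)) atTop (𝓝 0) := by
      simpa using ((tendsto_pow_atTop_nhds_zero_of_lt_one hr₀ hr).const_mul C).div_const (1 - r)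
    exact squeeze_zero (fun _ => dist_nonneg)
      (fun k => dist_le_of_le_geometric_of_tendsto₀ r _ hr (hgeom k) (hw k)) hbound
  obtain ⟨x, hx⟩ := hinc w hw_mono ((cauchySeq_of_le_geometric r C hr hu).congr_dist hdist)
  exact ⟨x, hx.congr_dist (by simpa only [dist_comm] using hdist)⟩

theorem stmt3_general {E : Type*} [MetricSpace E] [PartialOrder E] (P : E → E → E)
    (hPle₁ : ∀ u v : E, P u v ≤ u) (hPle₂ : ∀ u v : E, P u v ≤ v)
    (hPidem : ∀ u : E, P u u = u)
    (hPassoc : ∀ u v w : E, P (P u v) w = P u (P v w))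
    (hcontr : ∀ v u₀ u₁ : E, dist (P v u₀) (P v u₁) ≤ dist u₀ u₁)
    (hdec : ∀ u : ℕ → E, Antitone u → CauchySeq u →
      ∃ l, Filter.Tendsto u Filter.atTop (nhds l))
    (hinc : ∀ u : ℕ → E, Monotone u → CauchySeq u →
      ∃ l, Filter.Tendsto u Filter.atTop (nhds l)) :
    CompleteSpace E := by
  refine Metric.complete_of_convergent_controlled_sequences (fun n => (1 / 2 : ℝ) ^ n)
    (fun n => by positivity) fun u hu => ?_
  refine exists_tendsto_of_dist_le_geometric hPle₁ hPle₂ hPidem hPassoc hcontr hdec hinc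
    (C := 1) (r := 1 / 2) (by norm_num) (by norm_num) fun n => ?_
  simpa using (hu n n (n + 1) le_rfl n.le_succ).le

theorem stmt3 {E : Type*} [MetricSpace E] [PartialOrder E] (P : E → E → E)
    (hPle₁ : ∀ u v : E, P u v ≤ u) (hPle₂ : ∀ u v : E, P u v ≤ v)
    (hPidem : ∀ u : E, P u u = u)
    (hPsymm : ∀ u v : E, P u v = P v u)
    (hPassoc : ∀ u v w : E, P (P u v) w = P u (P v w))
    (hcontr : ∀ v u₀ u₁ : E, dist (P v u₀) (P v u₁) ≤ dist u₀ u₁)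
    (hdec : ∀ u : ℕ → E, Antitone u → CauchySeq u →
      ∃ l, Filter.Tendsto u Filter.atTop (nhds l))
    (hinc : ∀ u : ℕ → E, Monotone u → CauchySeq u →
      ∃ l, Filter.Tendsto u Filter.atTop (nhds l)) :
    CompleteSpace E :=
  stmt3_general P hPle₁ hPle₂ hPidem hPassoc hcontr hdec hinc
end

section
/- Let $(E, \leq, d)$ and $P$ be as follows: $P : E \times E \to E$ is symmetric, associative, idempotent ($P(u,u)=u$), satisfies $P(u,v) \leq u, v$, and is contractive: $d(P(v,u_0), P(v,u_1)) \leq d(u_0, u_1)$ for all $u_0, u_1, v$. Let $\{u_j\}_{j \geq 0} \subset E$ satisfy $d(u_j, u_{j+1}) \leq 2^{-j}$, and define $v^k_l = P(u_k, P(u_{k+1}, \ldots P(u_{k+l-1}, u_{k+l})\ldots))$. Then for all $k, l \geq 0$: $d(v^k_{l+1}, v^k_l) \leq 2^{-(k+l)}$. -/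
/-! Contractivity of `P` in its second argument lets one strip the outermost factor
`u k` from both `v k (l + 1)` and `v k l`, reducing the claim for `(k, l + 1)` to the one for
`(k + 1, l)`. After `l` steps one is left with `dist (P (u m) (u (m + 1))) (u m)` for
`m = k + l`, and idempotence writes `u m` as `P (u m) (u m)`, so this is at most
`dist (u m) (u (m + 1)) ≤ 2⁻ᵐ`. -/

section Contractive

variable {E : Type*} [PseudoMetricSpace E] {P : E → E → E}

theorem dist_left_le_of_idem_of_contractive (hPidem : ∀ a : E, P a a = a)
    (hcontr : ∀ c a b : E, dist (P c a) (P c b) ≤ dist a b) (a b : E) :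
    dist (P a b) a ≤ dist a b := by
  calc dist (P a b) a = dist (P a b) (P a a) := by rw [hPidem]
    _ ≤ dist b a := hcontr a b a
    _ = dist a b := dist_comm b a

theorem dist_nestedP_succ_le (hPidem : ∀ a : E, P a a = a)
    (hcontr : ∀ c a b : E, dist (P c a) (P c b) ≤ dist a b)
    (u : ℕ → E) (v : ℕ → ℕ → E) (hv0 : ∀ k, v k 0 = u k)
    (hvs : ∀ k l, v k (l + 1) = P (u k) (v (k + 1) l)) (k l : ℕ) :
    dist (v k (l + 1)) (v k l) ≤ dist (u (k + l)) (u (k + l + 1)) := by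
  induction l generalizing k with
  | zero =>
    rw [hvs, hv0, hv0]
    exact dist_left_le_of_idem_of_contractive hPidem hcontr (u k) (u (k + 1))
  | succ l ih =>
    rw [hvs k (l + 1), hvs k l]
    calc dist (P (u k) (v (k + 1) (l + 1))) (P (u k) (v (k + 1) l))
        ≤ dist (v (k + 1) (l + 1)) (v (k + 1) l) := hcontr _ _ _
      _ ≤ dist (u (k + 1 + l)) (u (k + 1 + l + 1)) := ih (k + 1)
      _ = dist (u (k + (l + 1))) (u (k + (l + 1) + 1)) := by rw [Nat.add_right_comm k 1 l, Nat.add_assoc k l 1]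

end Contractive

theorem stmt4_general {E : Type*} [MetricSpace E] (P : E → E → E)
    (hPidem : ∀ u : E, P u u = u)
    (hcontr : ∀ v u₀ u₁ : E, dist (P v u₀) (P v u₁) ≤ dist u₀ u₁)
    (u : ℕ → E) (hu : ∀ j, dist (u j) (u (j + 1)) ≤ (1 / 2 : ℝ) ^ j)
    (v : ℕ → ℕ → E)
    (hv0 : ∀ k, v k 0 = u k)
    (hvs : ∀ k l, v k (l + 1) = P (u k) (v (k + 1) l)) :
    ∀ k l, dist (v k (l + 1)) (v k l) ≤ (1 / 2 : ℝ) ^ (k + l) :=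
  fun k l => (dist_nestedP_succ_le hPidem hcontr u v hv0 hvs k l).trans (hu (k + l))

theorem stmt4 {E : Type*} [MetricSpace E] [PartialOrder E] (P : E → E → E)
    (hPle₁ : ∀ u v : E, P u v ≤ u) (hPle₂ : ∀ u v : E, P u v ≤ v)
    (hPidem : ∀ u : E, P u u = u)
    (hPsymm : ∀ u v : E, P u v = P v u)
    (hPassoc : ∀ u v w : E, P (P u v) w = P u (P v w))
    (hcontr : ∀ v u₀ u₁ : E, dist (P v u₀) (P v u₁) ≤ dist u₀ u₁)
    (u : ℕ → E) (hu : ∀ j, dist (u j) (u (j + 1)) ≤ (1 / 2 : ℝ) ^ j)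
    (v : ℕ → ℕ → E)
    (hv0 : ∀ k, v k 0 = u k)
    (hvs : ∀ k l, v k (l + 1) = P (u k) (v (k + 1) l)) :
    ∀ k l, dist (v k (l + 1)) (v k l) ≤ (1 / 2 : ℝ) ^ (k + l) :=
  stmt4_general P hPidem hcontr u hu v hv0 hvs
end

section
/- In the setting of the previous estimate (with $P$ symmetric, associative, idempotent, $P(u,v) \leq u, v$, contractive, and $d(u_j, u_{j+1}) \leq 2^{-j}$), assume moreover that each decreasing sequence $\{v^k_l\}_{l}$ $d$-converges to some $v^k \in E$ as $l \to \infty$, and that $d$ is continuous under these limits in the sense $d(v^k, w) = \lim_l d(v^k_l, w)$. Then $d(v^k, u_k) \leq 2^{1-k}$ for all $k$; in particular $\{v^k\}$ and $\{u_k\}$ are equivalent Cauchy sequences. -/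
/-! Since `u k = P (u k) (u k)`, contractivity gives
`d(v k (l+1), u k) ≤ d(v (k+1) l, u k) ≤ d(v (k+1) l, u (k+1)) + 2^{-k}`. Iterating bounds
`d(v k l, u k)` by a tail of the geometric series, `∑_{j ≥ k} 2^{-j} = 2^{1-k}`, and the bound
survives the limit in `l`. -/

open Finset

theorem dist_meet_left_le {E : Type*} [MetricSpace E] {P : E → E → E}
    (hPidem : ∀ u : E, P u u = u)
    (hcontr : ∀ v u₀ u₁ : E, dist (P v u₀) (P v u₁) ≤ dist u₀ u₁) (a w : E) :
    dist (P a w) a ≤ dist w a := by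
  simpa only [hPidem] using hcontr a w a

theorem dist_le_sum_of_dist_succ_le {E : Type*} [MetricSpace E] {u : ℕ → E} {v : ℕ → ℕ → E}
    {ε : ℕ → ℝ} (hu : ∀ j, dist (u j) (u (j + 1)) ≤ ε j) (hv0 : ∀ k, v k 0 = u k)
    (hvs : ∀ k l, dist (v k (l + 1)) (u k) ≤ dist (v (k + 1) l) (u k)) :
    ∀ l k, dist (v k l) (u k) ≤ ∑ i ∈ range l, ε (k + i) := by
  intro l
  induction l with
  | zero => simp [hv0]
  | succ l ih =>
    intro k
    calc dist (v k (l + 1)) (u k)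
        ≤ dist (v (k + 1) l) (u (k + 1)) + dist (u (k + 1)) (u k) :=
          (hvs k l).trans (dist_triangle _ _ _)
      _ ≤ ∑ i ∈ range l, ε (k + 1 + i) + ε k := by
          gcongr
          · exact ih (k + 1)
          · rw [dist_comm]; exact hu k
      _ = ∑ i ∈ range (l + 1), ε (k + i) := by
          rw [sum_range_succ' (fun i => ε (k + i))]
          simp only [add_assoc, add_comm 1, add_zero]

theorem sum_range_half_pow_add_le (k l : ℕ) :
    ∑ i ∈ range l, (1 / 2 : ℝ) ^ (k + i) ≤ 2 * (1 / 2 : ℝ) ^ k := by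
  simp only [pow_add, ← mul_sum]
  rw [mul_comm]
  exact mul_le_mul_of_nonneg_right (sum_geometric_two_le l) (by positivity)

theorem stmt5_general {E : Type*} [MetricSpace E] (P : E → E → E)
    (hPidem : ∀ u : E, P u u = u)
    (hcontr : ∀ v u₀ u₁ : E, dist (P v u₀) (P v u₁) ≤ dist u₀ u₁)
    (u : ℕ → E) (hu : ∀ j, dist (u j) (u (j + 1)) ≤ (1 / 2 : ℝ) ^ j)
    (v : ℕ → ℕ → E)
    (hv0 : ∀ k, v k 0 = u k)
    (hvs : ∀ k l, v k (l + 1) = P (u k) (v (k + 1) l))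
    (vlim : ℕ → E)
    (hdcont : ∀ k (w : E),
      Filter.Tendsto (fun l => dist (v k l) w) Filter.atTop (nhds (dist (vlim k) w))) :
    ∀ k, dist (vlim k) (u k) ≤ 2 * (1 / 2 : ℝ) ^ k := by
  have hstep : ∀ k l, dist (v k (l + 1)) (u k) ≤ dist (v (k + 1) l) (u k) := fun k l => by
    rw [hvs]
    exact dist_meet_left_le hPidem hcontr _ _
  intro k
  refine le_of_tendsto (hdcont k (u k)) (Filter.Eventually.of_forall fun l => ?_)
  exact (dist_le_sum_of_dist_succ_le hu hv0 hstep l k).trans (sum_range_half_pow_add_le k l)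

theorem stmt5 {E : Type*} [MetricSpace E] [PartialOrder E] (P : E → E → E)
    (hPle₁ : ∀ u v : E, P u v ≤ u) (hPle₂ : ∀ u v : E, P u v ≤ v)
    (hPidem : ∀ u : E, P u u = u)
    (hPsymm : ∀ u v : E, P u v = P v u)
    (hPassoc : ∀ u v w : E, P (P u v) w = P u (P v w))
    (hcontr : ∀ v u₀ u₁ : E, dist (P v u₀) (P v u₁) ≤ dist u₀ u₁)
    (u : ℕ → E) (hu : ∀ j, dist (u j) (u (j + 1)) ≤ (1 / 2 : ℝ) ^ j)
    (v : ℕ → ℕ → E)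
    (hv0 : ∀ k, v k 0 = u k)
    (hvs : ∀ k l, v k (l + 1) = P (u k) (v (k + 1) l))
    (hvdec : ∀ k, Antitone (fun l => v k l))
    (vlim : ℕ → E)
    (hconv : ∀ k, Filter.Tendsto (fun l => v k l) Filter.atTop (nhds (vlim k)))
    (hdcont : ∀ k (w : E),
      Filter.Tendsto (fun l => dist (v k l) w) Filter.atTop (nhds (dist (vlim k) w))) :
    ∀ k, dist (vlim k) (u k) ≤ 2 * (1 / 2 : ℝ) ^ k :=
  stmt5_general P hPidem hcontr u hu v hv0 hvs vlim hdcont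
end

section
/- Let $(R, d)$ be a metric space with basepoint $0$, whose completion is $(\overline{R}, d)$, let $F : R \to \mathbb{R}$ be $d$-lower semicontinuous with largest lsc extension $F : \overline{R} \to \mathbb{R} \cup \{+\infty\}$, and let $G$ be a group acting on $R$ by $d$-isometries. Denote by $\mathcal{M}$ the set of minimizers of $F$ on $\overline{R}$ and by $d_G(Gu, Gv) = \inf_{f,g \in G} d(f.u, g.v)$ the induced pseudometric. Assume properties: (P1) any two points of $R$ are joined by a $d$-geodesic in $\overline{R}$ along which $F$ is continuous and convex; (P2) any sequence $\{u_j\} \subset \overline{R}$ with $F(u_j) \to \inf F$ and $d(0, u_j)$ bounded has a subsequence $d$-converging to a point of $\mathcal{M}$; (P3) $\mathcal{M} \subset R$; (P5) $G$ acts transitively on $\mathcal{M}$; (P6) if $\mathcal{M} \neq \emptyset$ then for any $u, v \in R$ there exists $g \in G$ with $d_G(Gu, Gv) = d(u, g.v)$; (P7) $F(u) - F(v) = F(g.u) - F(g.v)$ for all $u, v \in R$, $g \in G$. Then the following are equivalent: (i) $\mathcal{M} \neq \emptyset$; (ii) $F$ is $G$-invariant and there exist $C, D > 0$ such that $F(u)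 \geq C\, d_G(G0, Gu) - D$ for all $u \in R$. -/
/-!
If `m` minimizes `F`, the cocycle identity forces `F` to be constant along the orbit of `m` and
then `G`-invariant. Were `F` not proper, there would be `u` with `F u - F m ≤ ε d_G(z, u)` and
`d_G(z, u)` large; walking unit length from `m` along the convex geodesic towards the point of
`G u` closest to `m` gives a point `v` with `d(z, v) ≤ d(z, m) + 1`, `F v ≤ F m + O(ε)`, and at
distance `≥ 1` from the orbit `G m = M`. Letting `ε → 0`, (P2) yields a minimizer within distance
`< 1` of such points, a contradiction. Conversely, properness together with invariance lets us
translate a minimizing sequence in `R` into a bounded one, and (P2) produces a minimizer; the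
infimum over the completion equals the one over `R` because `F` is the lsc envelope of `F|R`.
-/

open Set Filter Topology

noncomputable def orbitDist (G : Type*) {X : Type*} [SMul G X] [PseudoMetricSpace X] (x y : X) :
    ℝ :=
  ⨅ p : G × G, dist (p.1 • x) (p.2 • y)

section OrbitDist

variable (G : Type*) {X : Type*} [PseudoMetricSpace X]

theorem orbitDist_nonneg [SMul G X] (x y : X) : 0 ≤ orbitDist G x y :=
  Real.iInf_nonneg fun _ => dist_nonneg

theorem orbitDist_le_dist_smul [SMul G X] (x y : X) (g h : G) :
    orbitDist G x y ≤ dist (g • x) (h • y) :=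
  ciInf_le ⟨0, by rintro _ ⟨p, rfl⟩; exact dist_nonneg⟩ (g, h)

theorem orbitDist_le_dist_add [SMul G X] [Nonempty G] [IsIsometricSMul G X] (x x' y : X) :
    orbitDist G x y ≤ dist x x' + orbitDist G x' y := by
  have : orbitDist G x y - dist x x' ≤ orbitDist G x' y := le_ciInf fun p => by
    have hxy := orbitDist_le_dist_smul G x y p.1 p.2
    have htri := dist_triangle (p.1 • x) (p.1 • x') (p.2 • y)
    rw [dist_smul] at htri
    linarith
  linarith

variable {G}

theorem exists_dist_smul_lt_of_orbitDist_lt [Group G] [MulAction G X] [IsIsometricSMul G X]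
    {x y : X} {c : ℝ} (h : orbitDist G x y < c) : ∃ g : G, dist x (g • y) < c := by
  obtain ⟨⟨g, g'⟩, hlt⟩ := exists_lt_of_ciInf_lt h
  refine ⟨g⁻¹ * g', ?_⟩
  rwa [← dist_smul g, mul_smul, smul_inv_smul]

end OrbitDist

theorem iInf_eq_biInf_of_eq_iSup_iInf {X α : Type*} [PseudoMetricSpace X] [CompleteLattice α]
    {R : Set X} {F : X → α}
    (hext : ∀ u : X, F u = ⨆ (ε : ℝ) (_ : 0 < ε), ⨅ v ∈ {v | v ∈ R ∧ dist u v ≤ ε}, F v) :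
    ⨅ u, F u = ⨅ u ∈ R, F u := by
  refine le_antisymm (le_iInf₂ fun u _ => iInf_le F u) (le_iInf fun u => ?_)
  rw [hext u]
  exact le_iSup₂_of_le 1 one_pos (le_iInf₂ fun v hv => iInf₂_le v hv.1)

theorem exists_mem_inter_closure_of_minimizing {X : Type*} [PseudoMetricSpace X] {F : X → EReal}
    {M : Set X} {z : X}
    (hP2 : ∀ (u : ℕ → X) (C : ℝ), (∀ j, dist z (u j) ≤ C) →
      Tendsto (fun j => F (u j)) atTop (𝓝 (⨅ v, F v)) →
      ∃ m ∈ M, ∃ φ : ℕ → ℕ, StrictMono φ ∧ Tendsto (fun j => u (φ j)) atTop (𝓝 m))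
    {a : ℝ} (ha : ⨅ v, F v = a) {S : Set X} {B : ℝ}
    (h : ∀ η > 0, ∃ v ∈ S, dist z v ≤ B ∧ F v ≤ ((a + η : ℝ) : EReal)) :
    (M ∩ closure S).Nonempty := by
  choose v hvS hvB hvF using fun j : ℕ => h (1 / (j + 1)) Nat.one_div_pos_of_nat
  have hlow : ∀ j, (a : EReal) ≤ F (v j) := fun j => ha ▸ iInf_le F (v j)
  have hup : Tendsto (fun j : ℕ => ((a + 1 / (j + 1) : ℝ) : EReal)) atTop (𝓝 a) :=
    EReal.tendsto_coe.2 (by simpa using tendsto_one_div_add_atTop_nhds_zero_nat.const_add a)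
  obtain ⟨m, hm, φ, -, hφ⟩ := hP2 v B hvB
    (ha ▸ tendsto_of_tendsto_of_tendsto_of_le_of_le tendsto_const_nhds hup hlow hvF)
  exact ⟨m, hm, mem_closure_of_tendsto hφ (Eventually.of_forall fun j => hvS (φ j))⟩

theorem smul_invariant_of_minimizer {G X : Type*} [Group G] [MulAction G X] {R : Set X}
    {F : X → EReal} (hreal : ∀ u ∈ R, F u ≠ ⊤ ∧ F u ≠ ⊥)
    (hGR : ∀ (g : G), ∀ u ∈ R, g • u ∈ R)
    (hP7 : ∀ u ∈ R, ∀ v ∈ R, ∀ g : G, F (g • u) + F v = F u + F (g • v))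
    {m : X} (hmR : m ∈ R) (hmin : ∀ v ∈ R, F m ≤ F v) :
    ∀ u ∈ R, ∀ g : G, F (g • u) = F u := by
  have real : ∀ u ∈ R, ∃ r : ℝ, F u = r := fun u hu =>
    ⟨_, (EReal.coe_toReal (hreal u hu).1 (hreal u hu).2).symm⟩
  obtain ⟨a, ha⟩ := real m hmR
  -- `F (g⁻¹ • m) + F (g • m) = 2 F m` with both summands `≥ F m`
  have horbit : ∀ g : G, F (g • m) = F m := by
    intro g
    have h7 := hP7 _ (hGR g⁻¹ m hmR) m hmR g
    rw [smul_inv_smul] at h7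
    have h1 := hmin _ (hGR g⁻¹ m hmR)
    have h2 := hmin _ (hGR g m hmR)
    obtain ⟨b, hb⟩ := real _ (hGR g⁻¹ m hmR)
    obtain ⟨c, hc⟩ := real _ (hGR g m hmR)
    simp only [ha, hb, hc] at h7 h1 h2 ⊢
    norm_cast at h7 h1 h2 ⊢
    linarith
  intro u hu g
  have h7 := hP7 u hu m hmR g
  rw [horbit g] at h7
  obtain ⟨b, hb⟩ := real u hu
  obtain ⟨c, hc⟩ := real _ (hGR g u hu)
  simp only [ha, hb, hc] at h7 ⊢
  norm_cast at h7 ⊢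
  linarith

theorem exists_unit_step_of_convex_geodesic {X : Type*} [PseudoMetricSpace X] {x y : X}
    (hxy : 1 ≤ dist x y) {γ : ℝ → X} (hγ0 : γ 0 = x) (hγ1 : γ 1 = y)
    (hγ : ∀ s ∈ Icc (0 : ℝ) 1, ∀ t ∈ Icc (0 : ℝ) 1, dist (γ s) (γ t) = |s - t| * dist x y)
    {f : ℝ → ℝ} (hf : ConvexOn ℝ (Icc 0 1) f) :
    ∃ t ∈ Icc (0 : ℝ) 1, dist x (γ t) = 1 ∧ dist (γ t) y = dist x y - 1 ∧
      f t ≤ f 0 + (f 1 - f 0) / dist x y := by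
  set L := dist x y
  have hL : 0 < L := one_pos.trans_le hxy
  have h0 : (0 : ℝ) ∈ Icc (0 : ℝ) 1 := ⟨le_rfl, zero_le_one⟩
  have h1 : (1 : ℝ) ∈ Icc (0 : ℝ) 1 := ⟨zero_le_one, le_rfl⟩
  have ht : L⁻¹ ∈ Icc (0 : ℝ) 1 := ⟨inv_nonneg.2 hL.le, inv_le_one_of_one_le₀ hxy⟩
  refine ⟨L⁻¹, ht, ?_, ?_, ?_⟩
  · rw [← hγ0, hγ 0 h0 _ ht, zero_sub, abs_neg, abs_of_pos (inv_pos.2 hL), inv_mul_cancel₀ hL.ne']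
  · rw [← hγ1, hγ _ ht 1 h1, abs_of_nonpos (by linarith [ht.2]), neg_sub, sub_mul,
      inv_mul_cancel₀ hL.ne', one_mul]
  · have hcvx := hf.2 h0 h1 (sub_nonneg.2 ht.2) ht.1 (sub_add_cancel 1 L⁻¹)
    simp only [smul_eq_mul, mul_zero, mul_one, zero_add] at hcvx
    calc f L⁻¹ ≤ (1 - L⁻¹) * f 0 + L⁻¹ * f 1 := hcvx
      _ = f 0 + (f 1 - f 0) / L := by ring

section Properness

variable {G X : Type*} [Group G] [PseudoMetricSpace X] [MulAction G X] [IsIsometricSMul G X]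
  {R M : Set X} {F : X → EReal} {z m : X}

theorem exists_far_from_minimizers_of_not_proper
    (hGR : ∀ (g : G), ∀ u ∈ R, g • u ∈ R)
    (hP1 : ∀ u ∈ R, ∀ v ∈ R, ∃ γ : ℝ → X, γ 0 = u ∧ γ 1 = v ∧
      (∀ s ∈ Icc (0 : ℝ) 1, ∀ t ∈ Icc (0 : ℝ) 1, dist (γ s) (γ t) = |s - t| * dist u v) ∧
      ∃ f : ℝ → ℝ, ContinuousOn f (Icc 0 1) ∧ ConvexOn ℝ (Icc 0 1) f ∧
        ∀ t ∈ Icc (0 : ℝ) 1, F (γ t) = (f t : EReal))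
    (hP5 : ∀ u ∈ M, ∀ v ∈ M, ∃ g : G, g • u = v)
    (hP6 : ∀ u ∈ R, ∀ v ∈ R, ∃ g : G, orbitDist G u v = dist u (g • v))
    (hinv : ∀ u ∈ R, ∀ g : G, F (g • u) = F u)
    (hm : m ∈ M) (hmR : m ∈ R) (hmin : ∀ v, F m ≤ F v) {a : ℝ} (ha : F m = a)
    (hcon : ∀ C D : ℝ, 0 < C → 0 < D → ∃ u ∈ R, F u < ((C * orbitDist G z u - D : ℝ) : EReal))
    {η : ℝ} (hη : 0 < η) :
    ∃ v ∈ {v | ∀ m' ∈ M, 1 ≤ dist m' v}, dist z v ≤ dist z m + 1 ∧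
      F v ≤ ((a + η : ℝ) : EReal) := by
  set K := dist z m
  have hK : 0 ≤ K := dist_nonneg
  set ε := η / (1 + K)
  have hε : 0 < ε := by positivity
  obtain ⟨u, huR, hu⟩ := hcon ε (|a| + (1 + K) * ε) hε (by positivity)
  have hau : (a : EReal) ≤ F u := ha ▸ hmin u
  obtain ⟨b, hb⟩ : ∃ b : ℝ, F u = b :=
    ⟨_, (EReal.coe_toReal hu.ne_top (ne_bot_of_le_ne_bot (EReal.coe_ne_bot a) hau)).symm⟩
  rw [hb] at hu hau
  norm_cast at hu hau
  obtain ⟨g, hg⟩ := hP6 m hmR u huR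
  set L := dist m (g • u)
  have hzu : orbitDist G z u ≤ K + L := hg ▸ orbitDist_le_dist_add G z m u
  -- `ε (1 + K) < ε d_G(z, u)`, so the orbit of `u` is at distance `> 1` from `m`
  have hL : 1 ≤ L := by
    have : ε * (1 + K) < ε * orbitDist G z u := by linarith [neg_abs_le a]
    linarith [lt_of_mul_lt_mul_left this hε.le]
  obtain ⟨γ, hγ0, hγ1, hγ, f, -, hf, hFf⟩ := hP1 m hmR (g • u) (hGR g u huR)
  obtain ⟨t, ht, hmv, hvu, hft⟩ := exists_unit_step_of_convex_geodesic hL hγ0 hγ1 hγ hf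
  have hf0 : f 0 = a := by
    have := hFf 0 ⟨le_rfl, zero_le_one⟩
    rw [hγ0, ha] at this
    exact_mod_cast this.symm
  have hf1 : f 1 = b := by
    have := hFf 1 ⟨zero_le_one, le_rfl⟩
    rw [hγ1, hinv u huR g, hb] at this
    exact_mod_cast this.symm
  refine ⟨γ t, fun m' hm' => ?_, ?_, ?_⟩
  · obtain ⟨h, rfl⟩ := hP5 m hm m' hm'
    linarith [orbitDist_le_dist_smul G m u h g, dist_triangle (h • m) (γ t) (g • u)]
  · linarith [dist_triangle z m (γ t)]
  · rw [hFf t ht]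
    have hbaL : (b - a) / L ≤ ε * (1 + K) := by
      rw [div_le_iff₀ (one_pos.trans_le hL)]
      nlinarith [neg_abs_le a, mul_le_mul_of_nonneg_left hL (mul_nonneg hε.le hK)]
    have hεK : ε * (1 + K) = η := div_mul_cancel₀ η (by positivity)
    exact_mod_cast (hft.trans_eq (by rw [hf0, hf1])).trans (by linarith)

theorem exists_proper_bound_of_minimizer
    (hGR : ∀ (g : G), ∀ u ∈ R, g • u ∈ R)
    (hP1 : ∀ u ∈ R, ∀ v ∈ R, ∃ γ : ℝ → X, γ 0 = u ∧ γ 1 = v ∧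
      (∀ s ∈ Icc (0 : ℝ) 1, ∀ t ∈ Icc (0 : ℝ) 1, dist (γ s) (γ t) = |s - t| * dist u v) ∧
      ∃ f : ℝ → ℝ, ContinuousOn f (Icc 0 1) ∧ ConvexOn ℝ (Icc 0 1) f ∧
        ∀ t ∈ Icc (0 : ℝ) 1, F (γ t) = (f t : EReal))
    (hP2 : ∀ (u : ℕ → X) (C : ℝ), (∀ j, dist z (u j) ≤ C) →
      Tendsto (fun j => F (u j)) atTop (𝓝 (⨅ v, F v)) →
      ∃ m ∈ M, ∃ φ : ℕ → ℕ, StrictMono φ ∧ Tendsto (fun j => u (φ j)) atTop (𝓝 m))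
    (hP5 : ∀ u ∈ M, ∀ v ∈ M, ∃ g : G, g • u = v)
    (hP6 : ∀ u ∈ R, ∀ v ∈ R, ∃ g : G, orbitDist G u v = dist u (g • v))
    (hinv : ∀ u ∈ R, ∀ g : G, F (g • u) = F u)
    (hm : m ∈ M) (hmR : m ∈ R) (hmin : ∀ v, F m ≤ F v) {a : ℝ} (ha : F m = a) :
    ∃ C D : ℝ, 0 < C ∧ 0 < D ∧ ∀ u ∈ R, ((C * orbitDist G z u - D : ℝ) : EReal) ≤ F u := by
  by_contra! hcon
  have hinf : ⨅ v, F v = a := le_antisymm (ha ▸ iInf_le F m) (ha ▸ le_iInf hmin)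
  obtain ⟨m', hm', hcl⟩ := exists_mem_inter_closure_of_minimizing hP2 hinf fun η hη =>
    exists_far_from_minimizers_of_not_proper hGR hP1 hP5 hP6 hinv hm hmR hmin ha hcon hη
  obtain ⟨v, hv, hlt⟩ := Metric.mem_closure_iff.1 hcl 1 one_pos
  exact (hv m' hm').not_gt hlt

theorem nonempty_minimizers_of_proper (hz : F z ≠ ⊤)
    (hext : ∀ u : X, F u = ⨆ (ε : ℝ) (_ : 0 < ε), ⨅ v ∈ {v | v ∈ R ∧ dist u v ≤ ε}, F v)
    (hP2 : ∀ (u : ℕ → X) (C : ℝ), (∀ j, dist z (u j) ≤ C) →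
      Tendsto (fun j => F (u j)) atTop (𝓝 (⨅ v, F v)) →
      ∃ m ∈ M, ∃ φ : ℕ → ℕ, StrictMono φ ∧ Tendsto (fun j => u (φ j)) atTop (𝓝 m))
    (hinv : ∀ u ∈ R, ∀ g : G, F (g • u) = F u) {C D : ℝ} (hC : 0 < C)
    (hproper : ∀ u ∈ R, ((C * orbitDist G z u - D : ℝ) : EReal) ≤ F u) :
    M.Nonempty := by
  have hR := iInf_eq_biInf_of_eq_iSup_iInf hext
  have hlow : ((-D : ℝ) : EReal) ≤ ⨅ u, F u := hR ▸ le_iInf₂ fun u hu =>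
    (hproper u hu).trans' (by norm_cast; nlinarith [orbitDist_nonneg G z u])
  obtain ⟨a, ha⟩ : ∃ a : ℝ, ⨅ u, F u = a := ⟨_, (EReal.coe_toReal
    (ne_top_of_le_ne_top hz (iInf_le F z)) (ne_bot_of_le_ne_bot (EReal.coe_ne_bot _) hlow)).symm⟩
  obtain ⟨m, hm, -⟩ := exists_mem_inter_closure_of_minimizing hP2 ha (S := univ)
    (B := (a + 1 + D) / C) fun η hη => by
      have hlt : ⨅ u ∈ R, F u < ((a + min η 1 : ℝ) : EReal) := by
        rw [← hR, ha, EReal.coe_lt_coe_iff]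
        linarith [lt_min hη one_pos]
      obtain ⟨u, hu⟩ := iInf_lt_iff.1 hlt
      obtain ⟨huR, hFu⟩ := iInf_lt_iff.1 hu
      have hdist : orbitDist G z u < (a + 1 + D) / C := by
        have := (hproper u huR).trans_lt hFu
        norm_cast at this
        rw [lt_div_iff₀ hC]
        linarith [min_le_right η 1]
      obtain ⟨g, hg⟩ := exists_dist_smul_lt_of_orbitDist_lt hdist
      refine ⟨g • u, trivial, hg.le, ?_⟩
      rw [hinv u huR g]
      exact hFu.le.trans (EReal.coe_le_coe_iff.2 (by linarith [min_le_left η 1]))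
  exact ⟨m, hm⟩

end Properness

theorem stmt7_general {X : Type*} [MetricSpace X]
    {G : Type*} [Group G] [MulAction G X]
    (hiso : ∀ (g : G) (u v : X), dist (g • u) (g • v) = dist u v)
    (R : Set X) (z : X) (hz : z ∈ R)
    (hGR : ∀ (g : G), ∀ u ∈ R, g • u ∈ R)
    (F : X → EReal)
    (hreal : ∀ u ∈ R, F u ≠ ⊤ ∧ F u ≠ ⊥)
    (hext : ∀ u : X, F u = ⨆ (ε : ℝ) (_ : 0 < ε), ⨅ v ∈ {v | v ∈ R ∧ dist u v ≤ ε}, F v)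
    (M : Set X) (hM : M = {u : X | ∀ v, F u ≤ F v})
    (dG : X → X → ℝ)
    (hdG : ∀ u v : X, dG u v = ⨅ p : G × G, dist (p.1 • u) (p.2 • v))
    -- (P1) geodesics along which F is continuous and convex
    (hP1 : ∀ u ∈ R, ∀ v ∈ R, ∃ γ : ℝ → X, γ 0 = u ∧ γ 1 = v ∧
      (∀ s ∈ Set.Icc (0:ℝ) 1, ∀ t ∈ Set.Icc (0:ℝ) 1,
        dist (γ s) (γ t) = |s - t| * dist u v) ∧
      ∃ f : ℝ → ℝ, ContinuousOn f (Set.Icc 0 1) ∧ ConvexOn ℝ (Set.Icc 0 1) f ∧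
        ∀ t ∈ Set.Icc (0:ℝ) 1, F (γ t) = (f t : EReal))
    -- (P2) compactness of bounded minimizing sequences
    (hP2 : ∀ (u : ℕ → X) (C : ℝ), (∀ j, dist z (u j) ≤ C) →
      Filter.Tendsto (fun j => F (u j)) Filter.atTop (nhds (⨅ v, F v)) →
      ∃ m ∈ M, ∃ φ : ℕ → ℕ, StrictMono φ ∧
        Filter.Tendsto (fun j => u (φ j)) Filter.atTop (nhds m))
    -- (P3) minimizers are regular
    (hP3 : M ⊆ R)
    -- (P5) G acts transitively on M
    (hP5 : ∀ u ∈ M, ∀ v ∈ M, ∃ g : G, g • u = v)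
    -- (P6) the orbit distance is attained
    (hP6 : M.Nonempty → ∀ u ∈ R, ∀ v ∈ R, ∃ g : G, dG u v = dist u (g • v))
    -- (P7) cocycle property of F under the G-action
    (hP7 : ∀ u ∈ R, ∀ v ∈ R, ∀ g : G, F (g • u) + F v = F u + F (g • v)) :
    M.Nonempty ↔
      ((∀ u ∈ R, ∀ g : G, F (g • u) = F u) ∧
        ∃ C D : ℝ, 0 < C ∧ 0 < D ∧
          ∀ u ∈ R, (↑(C * dG z u - D) : EReal) ≤ F u) := by
  have : IsIsometricSMul G X := ⟨fun g => Isometry.of_dist_eq (hiso g)⟩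
  obtain rfl : dG = orbitDist G := funext₂ hdG
  constructor
  · rintro ⟨m, hm⟩
    have hmin : ∀ v, F m ≤ F v := by rw [hM] at hm; exact hm
    have hmR : m ∈ R := hP3 hm
    have hinv := smul_invariant_of_minimizer hreal hGR hP7 hmR fun v _ => hmin v
    exact ⟨hinv, exists_proper_bound_of_minimizer hGR hP1 hP2 hP5 (hP6 ⟨m, hm⟩) hinv hm hmR hmin
      (EReal.coe_toReal (hreal m hmR).1 (hreal m hmR).2).symm⟩
  · rintro ⟨hinv, C, D, hC, -, hproper⟩
    exact nonempty_minimizers_of_proper (hreal z hz).1 hext hP2 hinv hC hproper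

theorem stmt7 {X : Type*} [MetricSpace X] [CompleteSpace X]
    {G : Type*} [Group G] [MulAction G X]
    (hiso : ∀ (g : G) (u v : X), dist (g • u) (g • v) = dist u v)
    (R : Set X) (hdense : Dense R) (z : X) (hz : z ∈ R)
    (hGR : ∀ (g : G), ∀ u ∈ R, g • u ∈ R)
    (F : X → EReal)
    (hreal : ∀ u ∈ R, F u ≠ ⊤ ∧ F u ≠ ⊥)
    (hlsc : LowerSemicontinuous F)
    (hext : ∀ u : X, F u = ⨆ (ε : ℝ) (_ : 0 < ε), ⨅ v ∈ {v | v ∈ R ∧ dist u v ≤ ε}, F v)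
    (M : Set X) (hM : M = {u : X | ∀ v, F u ≤ F v})
    (dG : X → X → ℝ)
    (hdG : ∀ u v : X, dG u v = ⨅ p : G × G, dist (p.1 • u) (p.2 • v))
    -- (P1) geodesics along which F is continuous and convex
    (hP1 : ∀ u ∈ R, ∀ v ∈ R, ∃ γ : ℝ → X, γ 0 = u ∧ γ 1 = v ∧
      (∀ s ∈ Set.Icc (0:ℝ) 1, ∀ t ∈ Set.Icc (0:ℝ) 1,
        dist (γ s) (γ t) = |s - t| * dist u v) ∧
      ∃ f : ℝ → ℝ, ContinuousOn f (Set.Icc 0 1) ∧ ConvexOn ℝ (Set.Icc 0 1) f ∧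
        ∀ t ∈ Set.Icc (0:ℝ) 1, F (γ t) = (f t : EReal))
    -- (P2) compactness of bounded minimizing sequences
    (hP2 : ∀ (u : ℕ → X) (C : ℝ), (∀ j, dist z (u j) ≤ C) →
      Filter.Tendsto (fun j => F (u j)) Filter.atTop (nhds (⨅ v, F v)) →
      ∃ m ∈ M, ∃ φ : ℕ → ℕ, StrictMono φ ∧
        Filter.Tendsto (fun j => u (φ j)) Filter.atTop (nhds m))
    -- (P3) minimizers are regular
    (hP3 : M ⊆ R)
    -- (P5) G acts transitively on M
    (hP5 : ∀ u ∈ M, ∀ v ∈ M, ∃ g : G, g • u = v)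
    -- (P6) the orbit distance is attained
    (hP6 : M.Nonempty → ∀ u ∈ R, ∀ v ∈ R, ∃ g : G, dG u v = dist u (g • v))
    -- (P7) cocycle property of F under the G-action
    (hP7 : ∀ u ∈ R, ∀ v ∈ R, ∀ g : G, F (g • u) + F v = F u + F (g • v)) :
    M.Nonempty ↔
      ((∀ u ∈ R, ∀ g : G, F (g • u) = F u) ∧
        ∃ C D : ℝ, 0 < C ∧ 0 < D ∧
          ∀ u ∈ R, (↑(C * dG z u - D) : EReal) ≤ F u) :=
  stmt7_general hiso R z hz hGR F hreal hext M hM dG hdG hP1 hP2 hP3 hP5 hP6 hP7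
end

section
/- Let $(\overline{R}, d)$ be a metric space and $F : \overline{R} \to \mathbb{R} \cup \{+\infty\}$ with minimizer set $\mathcal{M} \neq \emptyset$ and $m = \inf F$. Assume: (a) for every $u \in \overline{R}$ with $F(u) < \infty$ and every $u_0 \in \mathcal{M}$ there is a constant speed $d$-geodesic $t \mapsto u_t$, $t \in [0,1]$, from $u_0$ to $u$ along which $F$ is convex and continuous; (b) there exist $\varepsilon > 0$ and $\delta > 0$ such that $F(v) \geq m + \delta$ whenever $d(v, \mathcal{M}) \geq \varepsilon$ (where $d(v, \mathcal{M}) = \inf_{w \in \mathcal{M}} d(v, w)$). Then $F(u) \geq m + \frac{\delta}{2\varepsilon}\, d(u, \mathcal{M}) - \delta$ for all $u \in \overline{R}$. -/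
/-!
Let `D = d(u, 𝓜) > 2ε` and pick `u₀ ∈ 𝓜` with `d := d(u₀, u) < D + ε`. On the geodesic from `u₀`
to `u`, the point at parameter `t = (ε + d - D) / d` lies at distance `D - ε` from `u`, hence at
distance at least `ε` from `𝓜`, so `F` exceeds `m + δ` there. Convexity of `F` along the geodesic
turns this into `F u ≥ m + δ / t`, and `δ / t = δ d / (ε + d - D) ≥ δ D / (2ε)`. When `D ≤ 2ε`
the claimed bound is at most `m`.
-/

open Set Metric

theorem ConvexOn.add_div_le_of_add_le {f : ℝ → ℝ} (hf : ConvexOn ℝ (Icc 0 1) f) {t δ : ℝ}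
    (ht₀ : 0 < t) (ht₁ : t ≤ 1) (h : f 0 + δ ≤ f t) : f 0 + δ / t ≤ f 1 := by
  have hchord : f t ≤ (1 - t) * f 0 + t * f 1 := by
    simpa using hf.2 (left_mem_Icc.2 zero_le_one) (right_mem_Icc.2 zero_le_one)
      (sub_nonneg.2 ht₁) ht₀.le (sub_add_cancel 1 t)
  have : δ / t ≤ f 1 - f 0 := by
    rw [div_le_iff₀ ht₀]
    linarith
  linarith

section

variable {X : Type*} [MetricSpace X] {M : Set X} {m ε δ : ℝ}

theorem add_div_mul_infDist_le_of_geodesic {γ : ℝ → X} {f : ℝ → ℝ} {u₀ u : X}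
    (hγ₁ : γ 1 = u)
    (hspeed : ∀ s ∈ Icc (0 : ℝ) 1, ∀ t ∈ Icc (0 : ℝ) 1, dist (γ s) (γ t) = |s - t| * dist u₀ u)
    (hf : ConvexOn ℝ (Icc 0 1) f) (hf₀ : f 0 = m)
    (hgap : ∀ t ∈ Icc (0 : ℝ) 1, ε ≤ infDist (γ t) M → m + δ ≤ f t)
    (hu₀ : u₀ ∈ M) (hclose : dist u u₀ < infDist u M + ε) (hfar : 2 * ε < infDist u M)
    (hε : 0 < ε) (hδ : 0 ≤ δ) :
    m + δ / (2 * ε) * infDist u M ≤ f 1 := by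
  set D := infDist u M
  set d := dist u₀ u
  have hDd : D ≤ d := (infDist_le_dist_of_mem hu₀).trans_eq (dist_comm u u₀)
  have hdD : d < D + ε := (dist_comm u₀ u).trans_lt hclose
  have hd : 0 < d := by linarith
  set t := (ε + d - D) / d with ht
  have ht₀ : 0 < t := div_pos (by linarith) hd
  have ht₁ : t ≤ 1 := (div_le_one hd).2 (by linarith)
  have htI : t ∈ Icc (0 : ℝ) 1 := ⟨ht₀.le, ht₁⟩
  have hdist : dist u (γ t) = D - ε := by
    rw [← hγ₁, hspeed 1 (right_mem_Icc.2 zero_le_one) t htI, abs_of_nonneg (sub_nonneg.2 ht₁), ht]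
    field_simp
    ring
  have hfar_t : ε ≤ infDist (γ t) M := by
    linarith [infDist_le_infDist_add_dist (x := u) (y := γ t) (s := M)]
  have hslope := hf.add_div_le_of_add_le ht₀ ht₁ (hf₀ ▸ hgap t htI hfar_t)
  calc m + δ / (2 * ε) * D ≤ m + δ / (2 * ε) * d := by gcongr
    _ = m + δ * d / (2 * ε) := by ring
    _ ≤ m + δ * d / (ε + d - D) := by gcongr <;> linarith
    _ = f 0 + δ / t := by rw [hf₀, ht, div_div_eq_mul_div]
    _ ≤ f 1 := hslope

end

theorem stmt12 {X : Type*} [MetricSpace X] (F : X → EReal) (m : ℝ)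
    (M : Set X) (hM : M = {u : X | ∀ v, F u ≤ F v}) (hMne : M.Nonempty)
    (hm : ∀ u₀ ∈ M, F u₀ = (m : EReal))
    (hgeo : ∀ u : X, F u ≠ ⊤ → ∀ u₀ ∈ M, ∃ γ : ℝ → X, γ 0 = u₀ ∧ γ 1 = u ∧
      (∀ s ∈ Set.Icc (0:ℝ) 1, ∀ t ∈ Set.Icc (0:ℝ) 1,
        dist (γ s) (γ t) = |s - t| * dist u₀ u) ∧
      ∃ f : ℝ → ℝ, ContinuousOn f (Set.Icc 0 1) ∧ ConvexOn ℝ (Set.Icc 0 1) f ∧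
        ∀ t ∈ Set.Icc (0:ℝ) 1, F (γ t) = (f t : EReal))
    (ε δ : ℝ) (hε : 0 < ε) (hδ : 0 < δ)
    (hgap : ∀ v : X, ε ≤ Metric.infDist v M → (↑(m + δ) : EReal) ≤ F v) :
    ∀ u : X, (↑(m + δ / (2 * ε) * Metric.infDist u M - δ) : EReal) ≤ F u := by
  intro u
  obtain ⟨w, hw⟩ := hMne
  by_cases hnear : infDist u M ≤ 2 * ε
  · have hmin : (m : EReal) ≤ F u := hm w hw ▸ (hM ▸ hw : w ∈ {u : X | ∀ v, F u ≤ F v}) u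
    refine le_trans (EReal.coe_le_coe_iff.2 ?_) hmin
    have : δ / (2 * ε) * infDist u M ≤ δ := by
      rw [div_mul_comm]
      exact mul_le_of_le_one_left hδ.le ((div_le_one (by positivity)).2 hnear)
    linarith
  obtain hu | hu := eq_or_ne (F u) ⊤
  · exact hu ▸ le_top
  obtain ⟨u₀, hu₀, hclose⟩ := (infDist_lt_iff ⟨w, hw⟩).1 (lt_add_of_pos_right (infDist u M) hε)
  obtain ⟨γ, hγ₀, hγ₁, hspeed, f, -, hf, hFf⟩ := hgeo u hu u₀ hu₀
  have hf₀ : f 0 = m := EReal.coe_injective <| by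
    rw [← hFf 0 (left_mem_Icc.2 zero_le_one), hγ₀, hm u₀ hu₀]
  have hgap' : ∀ t ∈ Icc (0 : ℝ) 1, ε ≤ infDist (γ t) M → m + δ ≤ f t := fun t ht h =>
    EReal.coe_le_coe_iff.1 (hFf t ht ▸ hgap (γ t) h)
  have hFu : F u = f 1 := hγ₁ ▸ hFf 1 (right_mem_Icc.2 zero_le_one)
  rw [hFu, EReal.coe_le_coe_iff]
  have := add_div_mul_infDist_le_of_geodesic hγ₁ hspeed hf hf₀ hgap' hu₀ hclose (not_le.1 hnear)
    hε hδ.le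
  linarith
end

section
/- Let $(M, d)$ be a complete metric space, $H \subset M$, $G$ a group acting on $M$ by $d$-isometries preserving $H$, and $F : M \to \mathbb{R} \cup \{+\infty\}$ a function satisfying $F(u) - F(v) = F(g.u) - F(g.v)$ for all $u, v \in M$ with finite $F$-values and all $g \in G$. If there exist $C, B > 0$ such that $F(u) \geq C\, d_G(G0, Gu) - B$ for all $u \in H$, where $d_G(Gu, Gv) = \inf_{g \in G} d(u, g.v)$ and $0 \in H$, then $F$ is $G$-invariant on $H$: $F(g.u) = F(u)$ for all $u \in H$, $g \in G$ (assuming $F$ is finite on $H$). -/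
/-!
Write `δ = F(g.u) - F(u)`. The cocycle identity makes `F` affine along the forward orbit of `g`:
`F(gⁿ.u) = F(u) + n δ`. The lower bound `C d_G(G0, Gu) - B` only depends on the orbit `Gu`, so it is
a constant lower bound along this sequence, which forces `δ ≥ 0`. Applying this to `g.u` and `g⁻¹`
gives `δ ≤ 0`.
-/

lemma nonneg_of_forall_le_add_nat_mul {a b δ : ℝ} (h : ∀ n : ℕ, b ≤ a + n * δ) : 0 ≤ δ := by
  by_contra! hδ
  obtain ⟨n, hn⟩ := exists_nat_gt ((a - b) / -δ)
  have := h n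
  rw [div_lt_iff₀ (neg_pos.mpr hδ)] at hn
  linarith

section Cocycle

variable {G M : Type*} [Group G] [MulAction G M]

lemma iInf_smul_smul_eq {α : Type*} [InfSet α] (φ : M → α) (g : G) (u : M) :
    ⨅ k : G, φ (k • g • u) = ⨅ k : G, φ (k • u) := by
  simpa only [Equiv.coe_mulRight, mul_smul] using (Equiv.mulRight g).iInf_comp (g := fun k => φ (k • u))

variable {H : Set M} {f : M → ℝ}
  (hH : ∀ g : G, ∀ u ∈ H, g • u ∈ H)
  (hf : ∀ g : G, ∀ u ∈ H, ∀ v ∈ H, f u - f v = f (g • u) - f (g • v))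
include hH hf

lemma apply_pow_smul_eq {u : M} (hu : u ∈ H) (g : G) (n : ℕ) :
    f (g ^ n • u) = f u + n * (f (g • u) - f u) := by
  induction n with
  | zero => simp
  | succ n ih =>
    have hstep := hf (g ^ n) (g • u) (hH g u hu) u hu
    rw [← mul_smul, ← pow_succ] at hstep
    push_cast
    linarith

lemma apply_le_apply_smul {u : M} (hu : u ∈ H) (hbdd : BddBelow (Set.range fun k : G => f (k • u)))
    (g : G) : f u ≤ f (g • u) := by
  obtain ⟨b, hb⟩ := hbdd
  have hδ : 0 ≤ f (g • u) - f u := nonneg_of_forall_le_add_nat_mul fun n =>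
    (hb ⟨g ^ n, rfl⟩).trans (apply_pow_smul_eq hH hf hu g n).le
  linarith

lemma apply_smul_eq_of_bddBelow (hbdd : ∀ u ∈ H, BddBelow (Set.range fun k : G => f (k • u)))
    {u : M} (hu : u ∈ H) (g : G) : f (g • u) = f u := by
  have hgu := hH g u hu
  have hback := apply_le_apply_smul hH hf hgu (hbdd _ hgu) g⁻¹
  rw [inv_smul_smul] at hback
  exact le_antisymm hback (apply_le_apply_smul hH hf hu (hbdd u hu) g)

end Cocycle

theorem stmt15_general {M : Type*} [MetricSpace M]
    {G : Type*} [Group G] [MulAction G M]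
    (H : Set M) (hHG : ∀ (g : G), ∀ u ∈ H, g • u ∈ H)
    (z : M)
    (F : M → EReal)
    (hcocycle : ∀ (g : G) (u v : M), F u ≠ ⊤ → F u ≠ ⊥ → F v ≠ ⊤ → F v ≠ ⊥ →
      F u - F v = F (g • u) - F (g • v))
    (hfin : ∀ u ∈ H, ∃ r : ℝ, F u = (r : EReal))
    (dG : M → M → ℝ) (hdG : ∀ u v : M, dG u v = ⨅ g : G, dist u (g • v))
    (C B : ℝ)
    (hprop : ∀ u ∈ H, (↑(C * dG z u - B) : EReal) ≤ F u) :
    ∀ u ∈ H, ∀ g : G, F (g • u) = F u := by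
  set f : M → ℝ := fun u => (F u).toReal
  have hF : ∀ u ∈ H, F u = f u := fun u hu => by
    obtain ⟨r, hr⟩ := hfin u hu
    simp [f, hr]
  have hf : ∀ g : G, ∀ u ∈ H, ∀ v ∈ H, f u - f v = f (g • u) - f (g • v) := by
    intro g u hu v hv
    have h := hcocycle g u v
    rw [hF u hu, hF v hv, hF _ (hHG g u hu), hF _ (hHG g v hv)] at h
    exact_mod_cast h (EReal.coe_ne_top _) (EReal.coe_ne_bot _) (EReal.coe_ne_top _)
      (EReal.coe_ne_bot _)
  have hbdd : ∀ u ∈ H, BddBelow (Set.range fun k : G => f (k • u)) := by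
    refine fun u hu => ⟨C * dG z u - B, ?_⟩
    rintro _ ⟨k, rfl⟩
    have h := hprop _ (hHG k u hu)
    rw [hF _ (hHG k u hu), hdG, iInf_smul_smul_eq (dist z), ← hdG] at h
    exact_mod_cast h
  intro u hu g
  rw [hF _ (hHG g u hu), hF u hu, apply_smul_eq_of_bddBelow hHG hf hbdd hu g]

theorem stmt15 {M : Type*} [MetricSpace M] [CompleteSpace M]
    {G : Type*} [Group G] [MulAction G M]
    (hiso : ∀ (g : G) (u v : M), dist (g • u) (g • v) = dist u v)
    (H : Set M) (hHG : ∀ (g : G), ∀ u ∈ H, g • u ∈ H)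
    (z : M) (hz : z ∈ H)
    (F : M → EReal)
    (hcocycle : ∀ (g : G) (u v : M), F u ≠ ⊤ → F u ≠ ⊥ → F v ≠ ⊤ → F v ≠ ⊥ →
      F u - F v = F (g • u) - F (g • v))
    (hfin : ∀ u ∈ H, ∃ r : ℝ, F u = (r : EReal))
    (dG : M → M → ℝ) (hdG : ∀ u v : M, dG u v = ⨅ g : G, dist u (g • v))
    (C B : ℝ) (hC : 0 < C) (hB : 0 < B)
    (hprop : ∀ u ∈ H, (↑(C * dG z u - B) : EReal) ≤ F u) :
    ∀ u ∈ H, ∀ g : G, F (g • u) = F u :=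
  stmt15_general H hHG z F hcocycle hfin dG hdG C B hprop
end
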